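/- arXiv:2308.15376 — 8 statements merged into one kernel-verified Lean document; each statement's English description precedes it below -/
import Mathlib

section
/- Let Γ be a group generated by a finite symmetric set S = S⁻¹ ⊆ Γ. Then for every finite nonempty subset D ⊆ Γ and every integer r ≥ 1, one has |∂_S D| · ( r·γ_S(r) − Σ_{k=0}^{r−1} γ_S(k) ) ≥ |D| · ( γ_S(r) − |D| ). -/
/-!
A generator `s` can only move boundary points of `D` out of `D`, and the defect `|D \ g D|` is
subadditive along a word, so `|D \ g D| ≤ ℓ(g) · |∂_S D|` for `g` of word length `ℓ(g)`. Summing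
over `g ∈ B_S(r)` and exchanging sums, `Σ_g ℓ(g) = Σ_{k<r} |B_S(r) \ B_S(k)|`. On the other hand
`|D| = |D \ g D| + |D ∩ g D|`, and the overlaps add up to at most `|D|²`, since a pair
`(x, y) ∈ D × D` with `x = g y` determines `g`.
-/

open scoped Pointwise

variable {G : Type*} [Group G] [DecidableEq G]

/-- The ball of radius `r` in the word metric: elements of `G` expressible as
a product of at most `r` elements of `S`. -/
def wordBall (S : Finset G) : ℕ → Finset G
  | 0 => {1}
  | r + 1 => wordBall S r ∪ S * wordBall S r

/-- The inner boundary of a finite set `D` with respect to the generating set `S`. -/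
def innerBoundary (S D : Finset G) : Finset G :=
  D.filter fun x => ∃ s ∈ S, s * x ∉ D

open Finset

theorem Finset.sum_card_inter_smul_le (A B C : Finset G) :
    ∑ g ∈ C, #(A ∩ g • B) ≤ #A * #B := by
  calc ∑ g ∈ C, #(A ∩ g • B)
      = ∑ g ∈ C, #{ab ∈ A ×ˢ B⁻¹ | ab.1 * ab.2 = g} := by
        simp only [card_inter_smul, card_mul_eq]
    _ = #{ab ∈ A ×ˢ B⁻¹ | ab.1 * ab.2 ∈ C} := sum_card_fiberwise_eq_card_filter _ _ _
    _ ≤ #(A ×ˢ B⁻¹) := card_filter_le _ _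
    _ = #A * #B := by rw [card_product, card_inv]

section WordBall

variable (S : Finset G)

lemma wordBall_zero : wordBall S 0 = {1} := rfl

lemma wordBall_succ (r : ℕ) : wordBall S (r + 1) = wordBall S r ∪ S * wordBall S r := rfl

lemma wordBall_mono : Monotone (wordBall S) :=
  monotone_nat_of_le_succ fun r => by rw [wordBall_succ]; exact subset_union_left

lemma filter_range_notMem_wordBall_eq {g : G} (hex : ∃ k, g ∈ wordBall S k) {r : ℕ}
    (hg : g ∈ wordBall S r) : {k ∈ range r | g ∉ wordBall S k} = range (Nat.find hex) := by
  ext k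
  simp only [mem_filter, mem_range]
  constructor
  · rintro ⟨-, hk⟩
    by_contra! hle
    exact hk (wordBall_mono S hle (Nat.find_spec hex))
  · intro hk
    exact ⟨hk.trans_le (Nat.find_min' _ hg), Nat.find_min _ hk⟩

lemma sum_card_filter_notMem_wordBall (r : ℕ) :
    ∑ g ∈ wordBall S r, #{k ∈ range r | g ∉ wordBall S k} =
      ∑ k ∈ range r, #(wordBall S r \ wordBall S k) := by
  simpa only [bipartiteAbove, bipartiteBelow, filter_notMem_eq_sdiff] using
    sum_card_bipartiteAbove_eq_sum_card_bipartiteBelow (fun g k => g ∉ wordBall S k)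

lemma cast_sum_card_wordBall_sdiff (r : ℕ) :
    ((∑ k ∈ range r, #(wordBall S r \ wordBall S k) : ℕ) : ℤ) =
      r * #(wordBall S r) - ∑ k ∈ range r, (#(wordBall S k) : ℤ) := by
  rw [Nat.cast_sum, sum_congr rfl fun k hk => by
      rw [card_sdiff_of_subset (wordBall_mono S (mem_range.1 hk).le),
        Nat.cast_sub (card_le_card (wordBall_mono S (mem_range.1 hk).le))],
    sum_sub_distrib, sum_const, card_range, nsmul_eq_mul]

end WordBall

section Boundary

variable {S : Finset G} (D : Finset G)

lemma card_sdiff_smul_le_card_innerBoundary (hsymm : ∀ s ∈ S, s⁻¹ ∈ S) {s : G}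
    (hs : s ∈ S) : #(D \ s • D) ≤ #(innerBoundary S D) := by
  refine card_le_card fun x hx => ?_
  rw [mem_sdiff, ← inv_smul_mem_iff] at hx
  exact mem_filter.2 ⟨hx.1, s⁻¹, hsymm s hs, hx.2⟩

lemma card_sdiff_smul_le_of_mem_wordBall (hsymm : ∀ s ∈ S, s⁻¹ ∈ S) {k : ℕ} {g : G}
    (hg : g ∈ wordBall S k) : #(D \ g • D) ≤ k * #(innerBoundary S D) := by
  induction k generalizing g with
  | zero => simp_all [wordBall_zero]
  | succ k ih =>
    rcases mem_union.1 (wordBall_succ S k ▸ hg) with hg | hg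
    · exact (ih hg).trans (Nat.mul_le_mul_right _ k.le_succ)
    · obtain ⟨s, hs, h, hh, rfl⟩ := mem_mul.1 hg
      calc #(D \ (s * h) • D)
          ≤ #(D \ s • D) + #(s • D \ (s * h) • D) :=
            (card_le_card (sdiff_triangle _ _ _)).trans (card_union_le _ _)
        _ = #(D \ s • D) + #(D \ h • D) := by
            rw [mul_smul, ← smul_finset_sdiff, card_smul_finset]
        _ ≤ #(innerBoundary S D) + k * #(innerBoundary S D) :=
            add_le_add (card_sdiff_smul_le_card_innerBoundary D hsymm hs) (ih hh)
        _ = (k + 1) * #(innerBoundary S D) := by ring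

lemma card_sdiff_smul_le_card_filter (hsymm : ∀ s ∈ S, s⁻¹ ∈ S) {r : ℕ} {g : G}
    (hg : g ∈ wordBall S r) :
    #(D \ g • D) ≤ #{k ∈ range r | g ∉ wordBall S k} * #(innerBoundary S D) := by
  have hex : ∃ k, g ∈ wordBall S k := ⟨r, hg⟩
  rw [filter_range_notMem_wordBall_eq S hex hg, card_range]
  exact card_sdiff_smul_le_of_mem_wordBall D hsymm (Nat.find_spec hex)

end Boundary

theorem stmt0_general (S : Finset G)
    (hsymm : ∀ s ∈ S, s⁻¹ ∈ S)
    (D : Finset G) (r : ℕ) :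
    (D.card : ℤ) * ((wordBall S r).card - (D.card : ℤ)) ≤
      ((innerBoundary S D).card : ℤ) *
        ((r : ℤ) * (wordBall S r).card - ∑ k ∈ Finset.range r, ((wordBall S k).card : ℤ)) := by
  set B := wordBall S r
  have hdefect : ∑ g ∈ B, #(D \ g • D) ≤
      #(innerBoundary S D) * ∑ k ∈ range r, #(B \ wordBall S k) := by
    rw [mul_comm, ← sum_card_filter_notMem_wordBall, sum_mul]
    exact sum_le_sum fun g hg => card_sdiff_smul_le_card_filter D hsymm hg
  have hsplit : #B * #D = ∑ g ∈ B, #(D \ g • D) + ∑ g ∈ B, #(D ∩ g • D) := by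
    rw [← sum_add_distrib, ← sum_const_nat fun g _ => card_sdiff_add_card_inter D (g • D)]
  have hcount : #B * #D ≤ #(innerBoundary S D) * ∑ k ∈ range r, #(B \ wordBall S k) + #D * #D :=
    hsplit ▸ add_le_add hdefect (sum_card_inter_smul_le D D B)
  have hcountZ : (#B * #D : ℤ) ≤
      #(innerBoundary S D) * ((∑ k ∈ range r, #(B \ wordBall S k) : ℕ) : ℤ) + #D * #D := by
    exact_mod_cast hcount
  rw [cast_sum_card_wordBall_sdiff] at hcountZ
  linarith

theorem stmt0 (S : Finset G)
    (hsymm : ∀ s ∈ S, s⁻¹ ∈ S) (hgen : Subgroup.closure (S : Set G) = ⊤)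
    (D : Finset G) (hD : D.Nonempty) (r : ℕ) (hr : 1 ≤ r) :
    (D.card : ℤ) * ((wordBall S r).card - (D.card : ℤ)) ≤
      ((innerBoundary S D).card : ℤ) *
        ((r : ℤ) * (wordBall S r).card - ∑ k ∈ Finset.range r, ((wordBall S k).card : ℤ)) :=
  stmt0_general S hsymm D r
end

section
/- Let Γ be a group generated by a finite symmetric set S = S⁻¹ ⊆ Γ. For every integer n ≥ 1 such that Føl(n) < ∞, one has (1/r)·(1 − Føl(n)/γ_S(r)) ≤ 1/n for every integer r ≥ 1; that is, U_{ℕ,γ_S}(Føl(n)) ≤ 1/n. -/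
/-!
Double counting. If `g` lies in the ball of radius `r`, then writing `g` as a word of length at
most `r`, every `d ∈ D` with `g * d ∉ D` leaves `D` at some letter, i.e. passes through the
inner boundary; so at most `r · |∂D|` points of `D` are pushed out of `D` by `g`. Summing over
the ball and counting the pairs `(g, d)` with `g * d ∈ D` from the side of `d` gives
`γ(r) · |D| ≤ |D|² + γ(r) · r · |∂D|`. For a set with `n · |∂D| ≤ |D|` this becomes
`n · γ(r) ≤ n · |D| + r · γ(r)`, which is the claim after dividing by `n · r · γ(r)`.
-/

open scoped Pointwise

variable {G : Type*} [Group G] [DecidableEq G]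

/-- The Følner function of `(G,S)`: the smallest cardinality of a finite nonempty
set `D` with `n·|∂_S D| ≤ |D|`, or `∞` if no such set exists. -/
noncomputable def folner (S : Finset G) (n : ℕ) : ℕ∞ :=
  ⨅ (D : Finset G) (_ : D.Nonempty) (_ : n * (innerBoundary S D).card ≤ D.card),
    (D.card : ℕ∞)

lemma one_mem_wordBall (S : Finset G) (r : ℕ) : (1 : G) ∈ wordBall S r := by
  induction r with
  | zero => simp [wordBall]
  | succ r ih => exact Finset.mem_union_left _ ih

lemma card_filter_mul_mem_innerBoundary_le (S D : Finset G) (s h : G) (hs : s ∈ S) :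
    (D.filter fun d => h * d ∈ D ∧ s * (h * d) ∉ D).card ≤ (innerBoundary S D).card := by
  refine Finset.card_le_card_of_injOn (h * ·) (fun d hd => ?_) (mul_right_injective h).injOn
  rw [Finset.mem_coe, Finset.mem_filter] at hd
  rw [innerBoundary, Finset.mem_coe, Finset.mem_filter]
  exact ⟨hd.2.1, s, hs, hd.2.2⟩

lemma card_filter_mul_notMem_le (S D : Finset G) {r : ℕ} {g : G} (hg : g ∈ wordBall S r) :
    (D.filter fun d => g * d ∉ D).card ≤ r * (innerBoundary S D).card := by
  induction r generalizing g with
  | zero =>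
    obtain rfl : g = 1 := by simpa [wordBall] using hg
    simp
  | succ r ih =>
    rcases Finset.mem_union.1 hg with hg | hg
    · exact (ih hg).trans (Nat.mul_le_mul_right _ r.le_succ)
    obtain ⟨s, hs, h, hh, rfl⟩ := Finset.mem_mul.1 hg
    have hsub : (D.filter fun d => s * h * d ∉ D) ⊆
        (D.filter fun d => h * d ∉ D) ∪ (D.filter fun d => h * d ∈ D ∧ s * (h * d) ∉ D) := by
      intro d hd
      simp only [Finset.mem_filter, Finset.mem_union, mul_assoc] at hd ⊢
      tauto
    calc (D.filter fun d => s * h * d ∉ D).card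
        ≤ (D.filter fun d => h * d ∉ D).card +
            (D.filter fun d => h * d ∈ D ∧ s * (h * d) ∉ D).card :=
          (Finset.card_le_card hsub).trans (Finset.card_union_le _ _)
      _ ≤ r * (innerBoundary S D).card + (innerBoundary S D).card :=
          Nat.add_le_add (ih hh) (card_filter_mul_mem_innerBoundary_le S D s h hs)
      _ = (r + 1) * (innerBoundary S D).card := by ring

lemma sum_card_filter_mul_mem_le (B D : Finset G) :
    ∑ g ∈ B, (D.filter fun d => g * d ∈ D).card ≤ D.card * D.card := by
  simp only [Finset.card_filter]
  rw [Finset.sum_comm, ← smul_eq_mul, ← Finset.sum_const]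
  refine Finset.sum_le_sum fun d _ => ?_
  rw [← Finset.card_filter]
  exact Finset.card_le_card_of_injOn (· * d) (fun g hg => (Finset.mem_filter.1 hg).2)
    (mul_left_injective d).injOn

lemma card_wordBall_mul_card_le (S D : Finset G) (r : ℕ) :
    (wordBall S r).card * D.card ≤
      D.card * D.card + (wordBall S r).card * (r * (innerBoundary S D).card) := by
  have hsplit : ∀ g ∈ wordBall S r,
      D.card ≤ (D.filter fun d => g * d ∈ D).card + r * (innerBoundary S D).card := fun g hg =>
    (Finset.card_filter_add_card_filter_not (s := D) (p := fun d => g * d ∈ D)).ge.trans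
      (Nat.add_le_add_left (card_filter_mul_notMem_le S D hg) _)
  calc (wordBall S r).card * D.card = ∑ _g ∈ wordBall S r, D.card := by simp
    _ ≤ ∑ g ∈ wordBall S r, ((D.filter fun d => g * d ∈ D).card + r * (innerBoundary S D).card) :=
        Finset.sum_le_sum hsplit
    _ = (∑ g ∈ wordBall S r, (D.filter fun d => g * d ∈ D).card) +
          (wordBall S r).card * (r * (innerBoundary S D).card) := by
        rw [Finset.sum_add_distrib, Finset.sum_const, smul_eq_mul]
    _ ≤ D.card * D.card + (wordBall S r).card * (r * (innerBoundary S D).card) :=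
        Nat.add_le_add_right (sum_card_filter_mul_mem_le _ D) _

lemma mul_card_wordBall_le (S : Finset G) {D : Finset G} (hD : D.Nonempty) {n : ℕ}
    (hfol : n * (innerBoundary S D).card ≤ D.card) (r : ℕ) :
    n * (wordBall S r).card ≤ n * D.card + (wordBall S r).card * r := by
  set γ := (wordBall S r).card
  set c := D.card
  refine Nat.le_of_mul_le_mul_right ?_ hD.card_pos
  calc n * γ * c = n * (γ * c) := by ring
    _ ≤ n * (c * c + γ * (r * (innerBoundary S D).card)) :=
        Nat.mul_le_mul_left _ (card_wordBall_mul_card_le S D r)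
    _ = n * c * c + γ * r * (n * (innerBoundary S D).card) := by ring
    _ ≤ n * c * c + γ * r * c := Nat.add_le_add_left (Nat.mul_le_mul_left _ hfol) _
    _ = (n * c + γ * r) * c := by ring

lemma exists_card_le_of_folner_eq (S : Finset G) {n F : ℕ} (hF : folner S n = F) :
    ∃ D : Finset G, D.Nonempty ∧ n * (innerBoundary S D).card ≤ D.card ∧ D.card ≤ F := by
  have hlt : folner S n < F + 1 := by
    rw [hF]
    exact_mod_cast F.lt_succ_self
  simp only [folner, iInf_lt_iff] at hlt
  obtain ⟨D, hD, hfol, hcard⟩ := hlt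
  exact ⟨D, hD, hfol, Order.lt_add_one_iff.1 (by exact_mod_cast hcard)⟩

lemma one_div_mul_one_sub_div_le {n F γ r : ℝ} (hn : 0 < n) (hγ : 0 < γ) (hr : 0 < r)
    (h : n * γ ≤ n * F + γ * r) :
    1 / r * (1 - F / γ) ≤ 1 / n := by
  rw [one_div_mul_eq_div, div_le_div_iff₀ hr hn, one_sub_div hγ.ne', div_mul_eq_mul_div,
    div_le_iff₀ hγ]
  linarith

theorem stmt2_general (S : Finset G)
    (n : ℕ) (hn : 1 ≤ n) (F : ℕ) (hF : folner S n = (F : ℕ∞)) :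
    ∀ r : ℕ, 1 ≤ r →
      (1 / (r : ℝ)) * (1 - (F : ℝ) / ((wordBall S r).card : ℝ)) ≤ 1 / (n : ℝ) := by
  intro r hr
  obtain ⟨D, hD, hfol, hDF⟩ := exists_card_le_of_folner_eq S hF
  have hγ : 0 < (wordBall S r).card := Finset.card_pos.2 ⟨1, one_mem_wordBall S r⟩
  have hkey : n * (wordBall S r).card ≤ n * F + (wordBall S r).card * r :=
    (mul_card_wordBall_le S hD hfol r).trans
      (Nat.add_le_add_right (Nat.mul_le_mul_left _ hDF) _)
  exact one_div_mul_one_sub_div_le (by exact_mod_cast hn) (by exact_mod_cast hγ)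
    (by exact_mod_cast hr) (by exact_mod_cast hkey)

theorem stmt2 (S : Finset G)
    (hsymm : ∀ s ∈ S, s⁻¹ ∈ S) (hgen : Subgroup.closure (S : Set G) = ⊤)
    (n : ℕ) (hn : 1 ≤ n) (F : ℕ) (hF : folner S n = (F : ℕ∞)) :
    ∀ r : ℕ, 1 ≤ r →
      (1 / (r : ℝ)) * (1 - (F : ℝ) / ((wordBall S r).card : ℝ)) ≤ 1 / (n : ℝ) :=
  stmt2_general S n hn F hF
end

section
/- Let F_q be the free group on q ≥ 1 generators, with symmetric generating set S consisting of the q generators and their inverses, and consider the Cayley graph on F_q in which x and y are adjacent iff x·y⁻¹ ∈ S. If D ⊆ F_q is finite, nonempty, and connected as an induced subgraph of the Cayley graph, then the outer boundary satisfies |∂′_S D| = (2q−2)·|D| + 2. -/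
/-- The symmetric generating set of the free group on `q` generators:
the generators and their inverses. -/
def freeGen (q : ℕ) : Set (FreeGroup (Fin q)) :=
  {x | ∃ i : Fin q, x = FreeGroup.of i ∨ x = (FreeGroup.of i)⁻¹}

/-- The Cayley graph of the free group `F_q` with respect to `freeGen q`:
`x` and `y` are adjacent iff `x * y⁻¹` is a generator or the inverse of one. -/
def cayley (q : ℕ) : SimpleGraph (FreeGroup (Fin q)) :=
  SimpleGraph.fromRel fun x y => x * y⁻¹ ∈ freeGen q

/-- The outer boundary of `D ⊆ F_q` with respect to `freeGen q`. -/
def outerBoundary (q : ℕ) (D : Set (FreeGroup (Fin q))) : Set (FreeGroup (Fin q)) :=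
  {x | x ∉ D ∧ ∃ s ∈ freeGen q, s * x ∈ D}

/-! The Cayley graph of `F_q` is the `2q`-regular tree rooted at `1` in which the parent of
`g ≠ 1` is `g.tail` (drop the first letter of the reduced word of `g`) and every other neighbour
of `g` is one letter longer than `g`. Induct on `|D|`. If `|D| ≥ 2`, a vertex `x ∈ D` of maximal
length has `x.tail` as its only neighbour in `D`, so `D \ {x}` is still connected. Passing from
`D \ {x}` to `D` removes `x` from the boundary and adds the `2q - 1` children of `x`, none of
which is adjacent to `D \ {x}` since its other neighbours are two letters longer than `x`. So each
vertex adds `2q - 2` to the boundary, which has `2q` elements for a singleton. -/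

namespace FreeGroup

variable {α : Type*}

theorem inv_mk_singleton (p : α × Bool) : (mk [p])⁻¹ = mk [(p.1, !p.2)] := by
  rw [inv_mk]
  rfl

variable [DecidableEq α]

theorem toWord_mk_singleton (p : α × Bool) : (mk [p]).toWord = [p] := by
  rw [toWord_mk, reduce_singleton]

theorem mk_singleton_injective : Function.Injective fun p : α × Bool => mk [p] := fun p p' h => by
  simpa [toWord_mk_singleton] using congrArg toWord h

theorem toWord_mk_singleton_mul (p : α × Bool) (g : FreeGroup α) :
    (mk [p] * g).toWord =
      if g.toWord.head? = some (p.1, !p.2) then g.toWord.tail else p :: g.toWord := by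
  rw [toWord_mul, toWord_mk_singleton, List.singleton_append, reduce.cons, reduce_toWord]
  rcases g.toWord with _ | ⟨⟨i, b⟩, t⟩
  · simp
  · obtain ⟨j, c⟩ := p
    cases b <;> cases c <;> simp [eq_comm]

def tail (g : FreeGroup α) : FreeGroup α := mk g.toWord.tail

theorem toWord_tail (g : FreeGroup α) : g.tail.toWord = g.toWord.tail := by
  rw [tail, toWord_mk, (isReduced_toWord.infix (List.tail_suffix _).isInfix).reduce_eq]

theorem mk_singleton_mul_tail {g : FreeGroup α} {p : α × Bool} {t : List (α × Bool)}
    (h : g.toWord = p :: t) : mk [p] * g.tail = g := by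
  rw [tail, h, List.tail_cons, mul_mk, List.singleton_append, ← h, mk_toWord]

end FreeGroup

open FreeGroup

variable {q : ℕ}

theorem mem_freeGen_iff {s : FreeGroup (Fin q)} : s ∈ freeGen q ↔ ∃ p, s = mk [p] := by
  constructor
  · rintro ⟨i, rfl | rfl⟩
    · exact ⟨(i, true), rfl⟩
    · exact ⟨(i, false), inv_mk_singleton (i, true)⟩
  · rintro ⟨⟨i, _ | _⟩, rfl⟩
    · exact ⟨i, Or.inr (inv_mk_singleton (i, true)).symm⟩
    · exact ⟨i, Or.inl rfl⟩

theorem cayley_adj_iff {x y : FreeGroup (Fin q)} : (cayley q).Adj x y ↔ ∃ p, x = mk [p] * y := by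
  rw [cayley, SimpleGraph.fromRel_adj, mem_freeGen_iff, mem_freeGen_iff]
  constructor
  · rintro ⟨-, ⟨p, hp⟩ | ⟨p, hp⟩⟩
    · exact ⟨p, by rw [← hp, inv_mul_cancel_right]⟩
    · exact ⟨(p.1, !p.2), by rw [← inv_mk_singleton, ← hp, mul_inv_rev, inv_inv,
        inv_mul_cancel_right]⟩
  · rintro ⟨p, rfl⟩
    refine ⟨fun h => ?_, Or.inl ⟨p, mul_inv_cancel_right _ _⟩⟩
    have := congrArg toWord (mul_eq_right.1 h)
    rw [toWord_mk_singleton, toWord_one] at this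
    exact List.cons_ne_nil _ _ this

theorem cayley_neighborSet (g : FreeGroup (Fin q)) :
    (cayley q).neighborSet g = Set.range fun p => mk [p] * g := by
  ext z
  rw [SimpleGraph.mem_neighborSet, SimpleGraph.adj_comm, cayley_adj_iff]
  exact ⟨fun ⟨p, hp⟩ => ⟨p, hp.symm⟩, fun ⟨p, hp⟩ => ⟨p, hp.symm⟩⟩

theorem ncard_cayley_neighborSet (g : FreeGroup (Fin q)) :
    ((cayley q).neighborSet g).ncard = 2 * q := by
  rw [cayley_neighborSet, Set.ncard_range_of_injective
    (fun p p' h => mk_singleton_injective (mul_right_cancel h))]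
  simp [mul_comm]

theorem finite_cayley_neighborSet (g : FreeGroup (Fin q)) : ((cayley q).neighborSet g).Finite := by
  rw [cayley_neighborSet]
  exact Set.finite_range _

theorem cayley_adj_tail {g : FreeGroup (Fin q)} (hg : g ≠ 1) : (cayley q).Adj g g.tail := by
  obtain ⟨p, t, h⟩ := List.exists_cons_of_ne_nil (mt toWord_eq_nil_iff.1 hg)
  exact cayley_adj_iff.2 ⟨p, (mk_singleton_mul_tail h).symm⟩

theorem norm_eq_of_cayley_adj_of_ne_tail {g z : FreeGroup (Fin q)} (h : (cayley q).Adj g z)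
    (hz : z ≠ g.tail) : z.norm = g.norm + 1 := by
  obtain ⟨p, rfl⟩ := cayley_adj_iff.1 h.symm
  rw [FreeGroup.norm, FreeGroup.norm, toWord_mk_singleton_mul]
  split_ifs with hp
  · exact absurd (toWord_injective (by rw [toWord_mk_singleton_mul, if_pos hp, toWord_tail])) hz
  · rfl

theorem tail_eq_of_cayley_adj {x z : FreeGroup (Fin q)} (h : (cayley q).Adj z x)
    (hz : z.norm = x.norm + 1) : z.tail = x := by
  by_contra hx
  have := norm_eq_of_cayley_adj_of_ne_tail h (Ne.symm hx)
  omega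

theorem mem_outerBoundary_iff {D : Set (FreeGroup (Fin q))} {x : FreeGroup (Fin q)} :
    x ∈ outerBoundary q D ↔ x ∉ D ∧ ∃ d ∈ D, (cayley q).Adj x d := by
  refine and_congr_right fun _ => ⟨?_, ?_⟩
  · rintro ⟨s, hs, hsx⟩
    obtain ⟨p, rfl⟩ := mem_freeGen_iff.1 hs
    refine ⟨_, hsx, cayley_adj_iff.2 ⟨(p.1, !p.2), ?_⟩⟩
    rw [← inv_mk_singleton, inv_mul_cancel_left]
  · rintro ⟨d, hd, hxd⟩
    obtain ⟨p, rfl⟩ := cayley_adj_iff.1 hxd.symm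
    exact ⟨mk [p], mem_freeGen_iff.2 ⟨p, rfl⟩, hd⟩

theorem outerBoundary_singleton (g : FreeGroup (Fin q)) :
    outerBoundary q {g} = (cayley q).neighborSet g := by
  ext z
  simp only [mem_outerBoundary_iff, Set.mem_singleton_iff, exists_eq_left,
    SimpleGraph.mem_neighborSet]
  exact ⟨fun h => h.2.symm, fun h => ⟨h.ne', h.symm⟩⟩

theorem outerBoundary_finite {D : Set (FreeGroup (Fin q))} (hD : D.Finite) :
    (outerBoundary q D).Finite := by
  refine (hD.biUnion fun d _ => finite_cayley_neighborSet d).subset fun x hx => ?_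
  obtain ⟨-, d, hd, hxd⟩ := mem_outerBoundary_iff.1 hx
  exact Set.mem_biUnion hd hxd.symm

theorem SimpleGraph.Preconnected.induce_diff_singleton {V : Type*} {G : SimpleGraph V}
    {s : Set V} {x : V} (hs : (G.induce s).Preconnected)
    (hx : {z ∈ s | G.Adj x z}.Subsingleton) : (G.induce (s \ {x})).Preconnected := by
  have hleaf := hs.induce_of_degree_eq_one (s := {v | (v : V) ≠ x}) fun v hv u hu w hw => by
    obtain hv : (v : V) = x := not_not.1 hv
    exact Subtype.ext (hx ⟨u.2, hv ▸ hu⟩ ⟨w.2, hv ▸ hw⟩)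
  exact hleaf.map ⟨fun v => ⟨v.1.1, v.1.2, v.2⟩, fun h => h⟩ fun v => ⟨⟨⟨v, v.2.1⟩, v.2.2⟩, rfl⟩

section MaxNorm

variable {D : Set (FreeGroup (Fin q))} {x : FreeGroup (Fin q)}

theorem eq_tail_of_cayley_adj_of_mem (hmax : ∀ d ∈ D, d.norm ≤ x.norm) {z : FreeGroup (Fin q)}
    (hz : z ∈ D) (hxz : (cayley q).Adj x z) : z = x.tail := by
  by_contra hne
  have := hmax z hz
  rw [norm_eq_of_cayley_adj_of_ne_tail hxz hne] at this
  omega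

theorem notMem_outerBoundary_diff_singleton (hmax : ∀ d ∈ D, d.norm ≤ x.norm)
    {z : FreeGroup (Fin q)} (hxz : (cayley q).Adj x z) (hz : z ≠ x.tail) :
    z ∉ outerBoundary q (D \ {x}) := by
  intro h
  obtain ⟨-, d, ⟨hd, hdx⟩, hzd⟩ := mem_outerBoundary_iff.1 h
  have hzx := norm_eq_of_cayley_adj_of_ne_tail hxz hz
  have hdz : d ≠ z.tail := by rwa [tail_eq_of_cayley_adj hxz.symm hzx]
  have := norm_eq_of_cayley_adj_of_ne_tail hzd hdz
  have := hmax d hd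
  omega

theorem outerBoundary_eq_union (hxD : x ∈ D) (hmax : ∀ d ∈ D, d.norm ≤ x.norm)
    (htail : x.tail ∈ D) :
    outerBoundary q D =
      (outerBoundary q (D \ {x}) \ {x}) ∪ ((cayley q).neighborSet x \ {x.tail}) := by
  ext z
  simp only [Set.mem_union, Set.mem_sdiff, Set.mem_singleton_iff, mem_outerBoundary_iff,
    SimpleGraph.mem_neighborSet]
  constructor
  · rintro ⟨hzD, d, hd, hzd⟩
    by_cases hdx : d = x
    · subst hdx
      exact Or.inr ⟨hzd.symm, fun h => hzD (h ▸ htail)⟩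
    · exact Or.inl ⟨⟨fun h => hzD h.1, d, ⟨hd, hdx⟩, hzd⟩, fun h => hzD (h ▸ hxD)⟩
  · rintro (⟨⟨hzD, d, ⟨hd, -⟩, hzd⟩, hzx⟩ | ⟨hxz, hz⟩)
    · exact ⟨fun h => hzD ⟨h, hzx⟩, d, hd, hzd⟩
    · exact ⟨fun h => hz (eq_tail_of_cayley_adj_of_mem hmax h hxz), x, hxD, hxz.symm⟩

theorem ncard_outerBoundary_add_two (hfin : D.Finite) (hxD : x ∈ D)
    (hmax : ∀ d ∈ D, d.norm ≤ x.norm) (hx : x ≠ 1) (htail : x.tail ∈ D) :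
    (outerBoundary q D).ncard + 2 = (outerBoundary q (D \ {x})).ncard + 2 * q := by
  have hadj := cayley_adj_tail hx
  have hxD' : x ∈ outerBoundary q (D \ {x}) :=
    mem_outerBoundary_iff.2 ⟨fun h => h.2 rfl, x.tail, ⟨htail, hadj.ne'⟩, hadj⟩
  have hdisj : Disjoint (outerBoundary q (D \ {x}) \ {x})
      ((cayley q).neighborSet x \ {x.tail}) :=
    Set.disjoint_right.2 fun z ⟨hxz, hz⟩ h => notMem_outerBoundary_diff_singleton hmax hxz hz h.1
  have hmem : x.tail ∈ (cayley q).neighborSet x := hadj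
  have hC := Set.ncard_sdiff_singleton_add_one hmem (finite_cayley_neighborSet x)
  have hB := Set.ncard_sdiff_singleton_add_one hxD' (outerBoundary_finite hfin.sdiff)
  rw [outerBoundary_eq_union hxD hmax htail, Set.ncard_union_eq hdisj
    (outerBoundary_finite hfin.sdiff).sdiff (finite_cayley_neighborSet x).sdiff]
  rw [ncard_cayley_neighborSet] at hC
  omega

theorem connected_induce_diff_singleton (hmax : ∀ d ∈ D, d.norm ≤ x.norm)
    (hx : x ≠ 1) (htail : x.tail ∈ D) (hconn : ((cayley q).induce D).Connected) :
    ((cayley q).induce (D \ {x})).Connected := by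
  rw [SimpleGraph.connected_iff]
  refine ⟨hconn.preconnected.induce_diff_singleton fun z hz w hw => ?_,
    ⟨x.tail, htail, (cayley_adj_tail hx).ne'⟩⟩
  rw [eq_tail_of_cayley_adj_of_mem hmax hz.1 hz.2, eq_tail_of_cayley_adj_of_mem hmax hw.1 hw.2]

end MaxNorm

theorem exists_max_norm_tail_mem {D : Set (FreeGroup (Fin q))} (hfin : D.Finite) (hD : D.Nontrivial)
    (hconn : ((cayley q).induce D).Connected) :
    ∃ x ∈ D, (∀ d ∈ D, d.norm ≤ x.norm) ∧ x ≠ 1 ∧ x.tail ∈ D := by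
  obtain ⟨x, hxD, hmax⟩ := Set.exists_max_image D FreeGroup.norm hfin hD.nonempty
  have hx : x ≠ 1 := by
    rintro rfl
    have hD1 : ∀ d ∈ D, d = 1 := fun d hd =>
      norm_eq_zero.1 (Nat.le_zero.1 (norm_one (α := Fin q) ▸ hmax d hd))
    obtain ⟨a, ha, b, hb, hab⟩ := hD
    exact hab ((hD1 a ha).trans (hD1 b hb).symm)
  have := hD.coe_sort
  obtain ⟨z, hz⟩ := hconn.preconnected.exists_adj_of_nontrivial ⟨x, hxD⟩
  exact ⟨x, hxD, hmax, hx, eq_tail_of_cayley_adj_of_mem hmax z.2 hz ▸ z.2⟩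

theorem stmt5 (q : ℕ) (hq : 1 ≤ q) (D : Set (FreeGroup (Fin q)))
    (hfin : D.Finite) (hne : D.Nonempty)
    (hconn : ((cayley q).induce D).Connected) :
    (outerBoundary q D).ncard = (2 * q - 2) * D.ncard + 2 := by
  obtain ⟨n, hn⟩ := Nat.exists_eq_add_one_of_ne_zero (Set.ncard_pos hfin |>.2 hne).ne'
  induction n generalizing D with
  | zero =>
    obtain ⟨g, rfl⟩ := Set.ncard_eq_one.1 hn
    rw [outerBoundary_singleton, ncard_cayley_neighborSet, hn]
    omega
  | succ n ih =>
    obtain ⟨x, hxD, hmax, hx, htail⟩ :=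
      exists_max_norm_tail_mem hfin (Set.one_lt_ncard_iff_nontrivial_and_finite.1 (by omega)).1 hconn
    have hcard : (D \ {x}).ncard = n + 1 := by
      rw [Set.ncard_sdiff_singleton_of_mem hxD, hn]
      rfl
    have hD' := ih (D \ {x}) hfin.sdiff ⟨x.tail, htail, (cayley_adj_tail hx).ne'⟩
      (connected_induce_diff_singleton hmax hx htail hconn) hcard
    have hstep := ncard_outerBoundary_add_two hfin hxD hmax hx htail
    rw [hcard] at hD'
    rw [hn, Nat.mul_succ]
    omega
end

section
/- Let F_q be the free group on q ≥ 1 generators, with symmetric generating set S consisting of the q generators and their inverses, and consider the Cayley graph on F_q in which x and y are adjacent iff x·y⁻¹ ∈ S. If D ⊆ F_q is finite and nonempty and the subgraph of the Cayley graph induced on D has exactly m connected components, then 2q·|∂_S D| ≥ (2q−2)·|D| + 2m; equivalently, |∂_S D|/|D| ≥ (q−1)/q + m/(q·|D|). -/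
/-- The inner boundary of `D ⊆ F_q` with respect to `freeGen q`. -/
def innerBoundaryF (q : ℕ) (D : Set (FreeGroup (Fin q))) : Set (FreeGroup (Fin q)) :=
  {x | x ∈ D ∧ ∃ s ∈ freeGen q, s * x ∉ D}

open FreeGroup

lemma core {α : Type*} [DecidableEq α] (a : α × Bool) (x : FreeGroup α) :
    (FreeGroup.mk [a] * x).toWord =
      List.casesOn x.toWord [a] fun hd tl =>
        if a.1 = hd.1 ∧ a.2 = !hd.2 then tl else a :: hd :: tl := by
  conv_lhs => rw [← mk_toWord (x := x)]
  rw [mul_mk, toWord_mk]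
  show reduce (a :: x.toWord) = _
  rw [reduce.cons, reduce_toWord]

/-- parent: drop first letter of reduced word -/
def par {α : Type*} [DecidableEq α] (x : FreeGroup α) : FreeGroup α := FreeGroup.mk x.toWord.tail

lemma L1' {α : Type*} [DecidableEq α] (a : α × Bool) (x : FreeGroup α) :
    norm (FreeGroup.mk [a] * x) = norm x + 1 ∨
      (norm (FreeGroup.mk [a] * x) + 1 = norm x ∧ FreeGroup.mk [a] * x = par x) := by
  have hc := core a x
  rcases h : x.toWord with _ | ⟨hd, tl⟩
  · left
    rw [h] at hc
    simp only [List.casesOn] at hc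
    unfold FreeGroup.norm
    rw [hc, h]
    rfl
  · rw [h] at hc
    by_cases hcan : a.1 = hd.1 ∧ a.2 = !hd.2
    · right
      simp only [hcan, if_true] at hc
      constructor
      · unfold FreeGroup.norm
        rw [hc, h]
        simp
      · rw [← mk_toWord (x := FreeGroup.mk [a] * x), hc, par, h]
        simp
    · left
      simp only [hcan, if_false] at hc
      unfold FreeGroup.norm
      rw [hc, h]
      simp

lemma gen_mk {q : ℕ} {s : FreeGroup (Fin q)} (hs : s ∈ freeGen q) :
    ∃ a : Fin q × Bool, s = FreeGroup.mk [a] := by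
  obtain ⟨i, hi | hi⟩ := hs
  · exact ⟨(i, true), hi⟩
  · refine ⟨(i, false), ?_⟩
    rw [hi]
    rfl

lemma gen_inv {q : ℕ} {s : FreeGroup (Fin q)} (hs : s ∈ freeGen q) : s⁻¹ ∈ freeGen q := by
  obtain ⟨i, hi | hi⟩ := hs
  · exact ⟨i, Or.inr (by rw [hi])⟩
  · exact ⟨i, Or.inl (by rw [hi, inv_inv])⟩

lemma L1 {q : ℕ} {s : FreeGroup (Fin q)} (hs : s ∈ freeGen q) (x : FreeGroup (Fin q)) :
    norm (s * x) = norm x + 1 ∨ (norm (s * x) + 1 = norm x ∧ s * x = par x) := by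
  obtain ⟨a, rfl⟩ := gen_mk hs
  exact L1' a x

/-- On an edge `y = s*x`, the endpoint of smaller norm is the parent of the other. -/
lemma L4 {q : ℕ} {s x y : FreeGroup (Fin q)} (hs : s ∈ freeGen q) (hy : y = s * x) :
    (norm y = norm x + 1 ∧ x = par y) ∨ (norm y + 1 = norm x ∧ y = par x) := by
  rcases L1 hs x with h1 | h2
  · left
    have hx : x = s⁻¹ * y := by rw [hy]; group
    rcases L1 (gen_inv hs) y with h1' | h2'
    · rw [← hx] at h1'
      rw [hy] at h1'
      omega
    · rw [← hx] at h2'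
      exact ⟨by rw [hy]; omega, h2'.2⟩
  · right
    rw [hy]
    exact h2

lemma of_ne_inv {q : ℕ} (i j : Fin q) : FreeGroup.of i ≠ (FreeGroup.of j)⁻¹ := by
  intro h
  have h2 : (FreeGroup.of i).toWord = ((FreeGroup.of j)⁻¹).toWord := by rw [h]
  have e1 : (FreeGroup.of i).toWord = [(i, true)] := toWord_of i
  have e2 : ((FreeGroup.of j)⁻¹).toWord = [(j, false)] := by
    show (FreeGroup.mk [(j, true)])⁻¹.toWord = _
    rw [inv_mk, toWord_mk]
    rfl
  rw [e1, e2] at h2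
  simp at h2

theorem stmt6 (q : ℕ) (hq : 1 ≤ q) (D : Set (FreeGroup (Fin q)))
    (hfin : D.Finite) (hne : D.Nonempty) (m : ℕ)
    (hm : Nat.card ((cayley q).induce D).ConnectedComponent = m) :
    (2 * q - 2) * D.ncard + 2 * m ≤ 2 * q * (innerBoundaryF q D).ncard := by
  classical
  haveI : Fintype D := hfin.fintype
  set G := (cayley q).induce D with hG
  -- the symmetric generator finset
  set Sfin : Finset (FreeGroup (Fin q)) :=
    (Finset.univ.image fun i : Fin q => FreeGroup.of i) ∪
      (Finset.univ.image fun i : Fin q => (FreeGroup.of i)⁻¹) with hSfin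
  have hSmem : ∀ s, s ∈ Sfin ↔ s ∈ freeGen q := by
    intro s
    simp only [hSfin, Finset.mem_union, Finset.mem_image, Finset.mem_univ, true_and]
    constructor
    · rintro (⟨i, rfl⟩ | ⟨i, rfl⟩)
      · exact ⟨i, Or.inl rfl⟩
      · exact ⟨i, Or.inr rfl⟩
    · rintro ⟨i, rfl | rfl⟩
      · exact Or.inl ⟨i, rfl⟩
      · exact Or.inr ⟨i, rfl⟩
  have hScard : Sfin.card = 2 * q := by
    have hinj2 : Function.Injective fun i : Fin q => (FreeGroup.of i)⁻¹ :=
      fun a b h => FreeGroup.of_injective (inv_injective h)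
    rw [hSfin, Finset.card_union_of_disjoint, Finset.card_image_of_injective _ FreeGroup.of_injective,
      Finset.card_image_of_injective _ hinj2]
    · simp [two_mul]
    · rw [Finset.disjoint_left]
      rintro a ha hb
      simp only [Finset.mem_image, Finset.mem_univ, true_and] at ha hb
      obtain ⟨i, rfl⟩ := ha
      obtain ⟨j, hj⟩ := hb
      exact of_ne_inv i j hj.symm
  set F : Finset (FreeGroup (Fin q)) := hfin.toFinset with hF
  have hFmem : ∀ x, x ∈ F ↔ x ∈ D := fun x => hfin.mem_toFinset
  -- representatives of minimal norm in each component
  have hrep : ∀ c : G.ConnectedComponent, ∃ v : D, G.connectedComponentMk v = c ∧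
      ∀ w : D, G.connectedComponentMk w = c → norm (v : FreeGroup (Fin q)) ≤ norm (w : FreeGroup (Fin q)) := by
    intro c
    obtain ⟨v0, hv0⟩ := c.exists_rep
    obtain ⟨v, hv, hvmin⟩ := Finset.exists_min_image
      (Finset.univ.filter fun w : D => G.connectedComponentMk w = c)
      (fun w => norm (w : FreeGroup (Fin q)))
      ⟨v0, by simp only [Finset.mem_filter, Finset.mem_univ, true_and]; exact hv0⟩
    simp only [Finset.mem_filter, Finset.mem_univ, true_and] at hv hvmin
    exact ⟨v, hv, fun w hw => hvmin w hw⟩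
  choose rep hrep1 hrep2 using hrep
  haveI : Fintype G.ConnectedComponent := Fintype.ofFinite _
  set R : Finset (FreeGroup (Fin q)) :=
    Finset.univ.image fun c : G.ConnectedComponent => ((rep c : D) : FreeGroup (Fin q)) with hR
  have hRinj : Function.Injective fun c : G.ConnectedComponent => ((rep c : D) : FreeGroup (Fin q)) := by
    intro c c' h
    have : rep c = rep c' := Subtype.ext h
    rw [← hrep1 c, ← hrep1 c', this]
  have hRcard : R.card = m := by
    rw [hR, Finset.card_image_of_injective _ hRinj, Finset.card_univ, ← Nat.card_eq_fintype_card, hm]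
  have hRF : R ⊆ F := by
    intro x hx
    rw [hR] at hx
    obtain ⟨c, _, rfl⟩ := Finset.mem_image.mp hx
    exact (hFmem _).mpr (rep c).2
  -- counting pairs
  set P : Finset (FreeGroup (Fin q) × FreeGroup (Fin q)) := F ×ˢ Sfin with hP
  set Pint := P.filter (fun p => p.2 * p.1 ∈ D) with hPint
  set Pbd := P.filter (fun p => p.2 * p.1 ∉ D) with hPbd
  have htotal : Pint.card + Pbd.card = F.card * (2 * q) := by
    rw [hPint, hPbd, Finset.card_filter_add_card_filter_not, hP,
      Finset.card_product, hScard]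
  -- boundary bound
  have hBfin : (innerBoundaryF q D).Finite := hfin.subset fun x hx => hx.1
  have hbd : Pbd.card ≤ (innerBoundaryF q D).ncard * (2 * q) := by
    rw [Set.ncard_eq_toFinset_card _ hBfin, ← hScard, ← Finset.card_product]
    apply Finset.card_le_card
    rintro ⟨x, s⟩ hp
    rw [hPbd, Finset.mem_filter, hP, Finset.mem_product] at hp
    obtain ⟨⟨hx, hs⟩, hns⟩ := hp
    rw [Finset.mem_product]
    refine ⟨?_, hs⟩
    rw [Set.Finite.mem_toFinset]
    exact ⟨(hFmem x).mp hx, s, (hSmem s).mp hs, hns⟩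
  -- child map
  set φ : FreeGroup (Fin q) × FreeGroup (Fin q) → FreeGroup (Fin q) :=
    fun p => if norm p.1 < norm (p.2 * p.1) then p.2 * p.1 else p.1 with hφ
  -- structure of internal pairs
  have hstruct : ∀ p ∈ Pint, φ p ∈ D ∧ par (φ p) ∈ D ∧ norm (par (φ p)) + 1 = norm (φ p) ∧
      par (φ p) * (φ p)⁻¹ ∈ freeGen q := by
    rintro ⟨x, s⟩ hp
    rw [hPint, Finset.mem_filter, hP, Finset.mem_product] at hp
    obtain ⟨⟨hx, hs⟩, hin⟩ := hp
    have hxD := (hFmem x).mp hx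
    have hsG := (hSmem s).mp hs
    rcases L4 hsG (rfl : s * x = s * x) with ⟨h1, h2⟩ | ⟨h1, h2⟩
    · have hlt : norm x < norm (s * x) := by omega
      have hφp : φ (x, s) = s * x := by rw [hφ]; simp [hlt]
      rw [hφp, ← h2]
      refine ⟨hin, hxD, by omega, ?_⟩
      have : x * (s * x)⁻¹ = s⁻¹ := by group
      rw [this]
      exact gen_inv hsG
    · have hlt : ¬ norm x < norm (s * x) := by omega
      have hφp : φ (x, s) = x := by rw [hφ]; simp [hlt]
      rw [hφp, ← h2]
      refine ⟨hxD, hin, by omega, ?_⟩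
      have : s * x * x⁻¹ = s := by group
      rw [this]
      exact hsG
  -- φ avoids R
  have hmaps : ∀ p ∈ Pint, φ p ∈ F \ R := by
    intro p hp
    obtain ⟨hv, hw, hnorm, hgen⟩ := hstruct p hp
    rw [Finset.mem_sdiff]
    refine ⟨(hFmem _).mpr hv, ?_⟩
    intro hvR
    rw [hR, Finset.mem_image] at hvR
    obtain ⟨c, _, hc⟩ := hvR
    -- adjacency between par (φ p) and φ p in G
    have hne' : par (φ p) ≠ φ p := by
      intro h
      rw [h] at hnorm
      omega
    have hadj : (cayley q).Adj (par (φ p)) (φ p) := by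
      rw [cayley, SimpleGraph.fromRel_adj]
      exact ⟨hne', Or.inl hgen⟩
    have hadjG : G.Adj ⟨par (φ p), hw⟩ ⟨φ p, hv⟩ := hadj
    have hcomp : G.connectedComponentMk ⟨par (φ p), hw⟩ = G.connectedComponentMk ⟨φ p, hv⟩ :=
      SimpleGraph.ConnectedComponent.sound hadjG.reachable
    have hrc : (⟨φ p, hv⟩ : D) = rep c := Subtype.ext hc.symm
    have hcc : G.connectedComponentMk ⟨φ p, hv⟩ = c := by rw [hrc, hrep1]
    have := hrep2 c ⟨par (φ p), hw⟩ (by rw [hcomp, hcc])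
    rw [← hrc] at this
    simp only at this
    omega
  -- fibers of φ have size ≤ 2
  have hfib : ∀ v ∈ F \ R, (Pint.filter fun p => φ p = v).card ≤ 2 := by
    intro v _
    have hsub : (Pint.filter fun p => φ p = v) ⊆
        {(v, par v * v⁻¹), (par v, v * (par v)⁻¹)} := by
      rintro ⟨x, s⟩ hp
      rw [Finset.mem_filter] at hp
      obtain ⟨hp, hφv⟩ := hp
      rw [hPint, Finset.mem_filter, hP, Finset.mem_product] at hp
      obtain ⟨⟨hx, hs⟩, hin⟩ := hp
      have hsG := (hSmem s).mp hs
      rcases L4 hsG (rfl : s * x = s * x) with ⟨h1, h2⟩ | ⟨h1, h2⟩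
      · have hlt : norm x < norm (s * x) := by omega
        have hφp : φ (x, s) = s * x := by rw [hφ]; simp [hlt]
        rw [hφp] at hφv
        have hxv : x = par v := by rw [← hφv]; exact h2
        have hsv : s = v * (par v)⁻¹ := by
          rw [← hxv, ← hφv]; group
        simp [hxv, hsv]
      · have hlt : ¬ norm x < norm (s * x) := by omega
        have hφp : φ (x, s) = x := by rw [hφ]; simp [hlt]
        rw [hφp] at hφv
        have hsv : s = par v * v⁻¹ := by
          rw [← hφv, ← h2]; group
        simp [hφv, hsv]
    calc (Pint.filter fun p => φ p = v).card ≤ _ := Finset.card_le_card hsub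
      _ ≤ 2 := Finset.card_insert_le _ _ |>.trans (by simp)
  have hint : Pint.card ≤ 2 * (F.card - m) := by
    have := Finset.card_le_mul_card_image_of_maps_to hmaps 2 hfib
    rwa [Finset.card_sdiff_of_subset hRF, hRcard] at this
  -- final arithmetic
  have hmF : m ≤ F.card := hRcard ▸ Finset.card_le_card hRF
  rw [Set.ncard_eq_toFinset_card _ hfin]
  set A := F.card
  set B := (innerBoundaryF q D).ncard
  have e1 : (2 * q - 2) * A = 2 * (q * A) - 2 * A := by
    rw [Nat.sub_mul]; ring_nf
  have e2 : A * (2 * q) = 2 * (q * A) := by ring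
  have e3 : 2 * q * B = 2 * (q * B) := by ring
  have e4 : A ≤ q * A := Nat.le_mul_of_pos_left A hq
  rw [e1, e3]
  rw [e2] at htotal
  have hbd' : Pbd.card ≤ B * (2 * q) := hbd
  have e5 : B * (2 * q) = 2 * (q * B) := by ring
  rw [e5] at hbd'
  omega
end

section
/- Let d ≥ 1 be an integer. For every finite nonempty subset D ⊆ ℤ^d, the inner boundary with respect to the standard generating set satisfies (|∂D| : ℝ) ≥ |D|^{(d−1)/d}; equivalently, |∂D|/|D| ≥ |D|^{−1/d}. -/
/-!
Every axis-parallel line through a point of `D` leaves `D` upwards, so it meets the "upper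
boundary" `U ⊆ ∂D` of points `x ∈ D` with `x + e_j ∉ D` for some `j`. Applying the grid-lines
(Loomis–Whitney) inequality `lintegral_prod_lintegral_pow_le` to the indicator of `U` under the
counting measure gives `|D| ≤ |U| ^ (d / (d - 1))`.
-/

open MeasureTheory Function

/-- The inner boundary of a finite subset of `ℤ^d` with respect to the standard
generating set `{±e_1, …, ±e_d}`. -/
def innerBoundaryZ (d : ℕ) (D : Finset (Fin d → ℤ)) : Finset (Fin d → ℤ) :=
  D.filter fun x => ∃ j : Fin d, x + Pi.single j 1 ∉ D ∨ x - Pi.single j 1 ∉ D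

theorem MeasureTheory.Measure.pi_count {ι α : Type*} [Fintype ι] [MeasurableSpace α]
    [MeasurableSingletonClass α] [Countable α] :
    Measure.pi (fun _ : ι => (Measure.count : Measure α)) = Measure.count := by
  refine Measure.ext_iff_singleton.2 fun a => ?_
  rw [Measure.count_singleton, ← Set.univ_pi_singleton, Measure.pi_pi]
  simp

section GridLines

variable {ι α : Type*} [Fintype ι] [DecidableEq ι] [MeasurableSpace α]
  [MeasurableSingletonClass α] [Countable α]

theorem card_le_card_rpow_of_forall_exists_update_mem {p : ℝ}
    (hp : (Fintype.card ι : ℝ).HolderConjugate p) (D U : Finset (ι → α))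
    (hDU : ∀ x ∈ D, ∀ i, ∃ t, update x i t ∈ U) : (D.card : ℝ) ≤ (U.card : ℝ) ^ p := by
  set f : (ι → α) → ENNReal := (U : Set (ι → α)).indicator 1
  have hline : ∀ x ∈ D, ∀ i, 1 ≤ ∫⁻ t, f (update x i t) ∂Measure.count := by
    intro x hx i
    obtain ⟨t, ht⟩ := hDU x hx i
    rw [lintegral_count]
    calc (1 : ENNReal) = f (update x i t) := by simp [f, ht]
      _ ≤ ∑' s, f (update x i s) := ENNReal.le_tsum t
  have hmain : (D.card : ENNReal) ≤ (U.card : ENNReal) ^ p := by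
    calc (D.card : ENNReal) = ∑ x ∈ D, 1 := by simp
      _ ≤ ∑ x ∈ D, ∏ i, (∫⁻ t, f (update x i t) ∂Measure.count) ^
            ((1 : ℝ) / (Fintype.card ι - 1 : ℝ)) := by
          gcongr with x hx
          exact Finset.one_le_prod' fun i _ =>
            ENNReal.one_le_rpow (hline x hx i) (one_div_pos.2 (sub_pos.2 hp.lt))
      _ ≤ ∑' x, ∏ i, (∫⁻ t, f (update x i t) ∂Measure.count) ^
            ((1 : ℝ) / (Fintype.card ι - 1 : ℝ)) := ENNReal.sum_le_tsum D
      _ ≤ (∫⁻ x, f x ∂Measure.count) ^ p := by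
          simpa [Measure.pi_count, lintegral_count] using
            lintegral_prod_lintegral_pow_le (fun _ : ι => (Measure.count : Measure α)) hp
              (measurable_of_countable f)
      _ = (U.card : ENNReal) ^ p := by
          rw [lintegral_indicator_one MeasurableSet.of_discrete, Measure.count_apply_finset]
  have := ENNReal.toReal_mono (ENNReal.rpow_ne_top_of_nonneg hp.symm.nonneg (by simp)) hmain
  rwa [← ENNReal.toReal_rpow, ENNReal.toReal_natCast, ENNReal.toReal_natCast] at this

end GridLines

section UpperBoundary

variable {ι : Type*} [Fintype ι] [DecidableEq ι]

def upperBoundary (D : Finset (ι → ℤ)) : Finset (ι → ℤ) :=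
  D.filter fun x => ∃ j, x + Pi.single j 1 ∉ D

theorem upperBoundary_subset_innerBoundaryZ {d : ℕ} (D : Finset (Fin d → ℤ)) :
    upperBoundary D ⊆ innerBoundaryZ d D := by
  intro x hx
  simp only [upperBoundary, innerBoundaryZ, Finset.mem_filter] at hx ⊢
  exact ⟨hx.1, hx.2.imp fun _ => Or.inl⟩

/-- The witness is the topmost point of `D` on the line through `x` in direction `e_j`. -/
theorem exists_update_mem_upperBoundary {D : Finset (ι → ℤ)} {x : ι → ℤ} (hx : x ∈ D) (j : ι) :
    ∃ t, update x j t ∈ upperBoundary D := by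
  set A := D.preimage (update x j) (update_injective x j).injOn
  have hA : A.Nonempty := ⟨x j, by simpa [A]⟩
  refine ⟨A.max' hA, Finset.mem_filter.2 ⟨?_, j, fun hmem => ?_⟩⟩
  · simpa [A] using A.max'_mem hA
  · have hstep : update x j (A.max' hA) + Pi.single j 1 = update x j (A.max' hA + 1) := by
      simp only [Pi.update_eq_sub_add_single, Pi.single_add]; abel
    have : A.max' hA + 1 ≤ A.max' hA := A.le_max' _ (by simpa [A, hstep] using hmem)
    omega

end UpperBoundary

theorem stmt7 (d : ℕ) (hd : 1 ≤ d) (D : Finset (Fin d → ℤ)) (hD : D.Nonempty) :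
    (D.card : ℝ) ^ (((d : ℝ) - 1) / (d : ℝ)) ≤ ((innerBoundaryZ d D).card : ℝ) := by
  refine le_trans ?_ (Nat.cast_le.2 (Finset.card_le_card (upperBoundary_subset_innerBoundaryZ D)))
  obtain rfl | hd := hd.eq_or_lt
  · obtain ⟨x, hx⟩ := hD
    obtain ⟨t, ht⟩ := exists_update_mem_upperBoundary hx 0
    simpa using Finset.card_pos.2 ⟨_, ht⟩
  · have hp : (d : ℝ).HolderConjugate (d / (d - 1)) :=
      .conjExponent (by exact_mod_cast hd)
    rw [← inv_div, Real.rpow_inv_le_iff_of_pos (by positivity) (by positivity) hp.symm.pos]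
    exact card_le_card_rpow_of_forall_exists_update_mem (by simpa using hp) D _
      fun _ hx i => exists_update_mem_upperBoundary hx i
end

section
/- Let g : [1,∞) → (0,∞) be nondecreasing and let γ : ℕ → ℕ be a function with γ(k) ≥ 1 for all k and γ(k−1) ≥ g(k) for every integer k ≥ 1. Then for every t ≥ 0, sup_{r ∈ ℝ, r ≥ 1} (1/r)·(1 − t/g(r)) ≤ sup_{k ∈ ℕ, k ≥ 1} (1/k)·(1 − t/γ(k)). -/
theorem stmt14 (g : ℝ → ℝ) (hgpos : ∀ r : ℝ, 1 ≤ r → 0 < g r)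
    (hmono : MonotoneOn g (Set.Ici 1))
    (γ : ℕ → ℕ) (hγ : ∀ k : ℕ, 1 ≤ γ k)
    (hcomp : ∀ k : ℕ, 1 ≤ k → g (k : ℝ) ≤ (γ (k - 1) : ℝ))
    (t : ℝ) (ht : 0 ≤ t) :
    (⨆ r : {r : ℝ // 1 ≤ r}, (1 / (r : ℝ)) * (1 - t / g r)) ≤
      ⨆ k : {k : ℕ // 1 ≤ k}, (1 / ((k : ℕ) : ℝ)) * (1 - t / (γ k : ℝ)) := by
  have hbdd : BddAbove (Set.range fun k : {k : ℕ // 1 ≤ k} =>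
      (1 / ((k : ℕ) : ℝ)) * (1 - t / (γ k : ℝ))) := by
    refine ⟨1, ?_⟩
    rintro x ⟨k, rfl⟩
    have hk : (1:ℝ) ≤ ((k : ℕ) : ℝ) := by exact_mod_cast k.2
    have hγk : (0:ℝ) < (γ k : ℝ) := by exact_mod_cast hγ k
    have h1 : 0 ≤ t / (γ k : ℝ) := div_nonneg ht hγk.le
    have h2 : (1:ℝ) / ((k : ℕ) : ℝ) ≤ 1 := by
      rw [div_le_one (by linarith)]; linarith
    have h3 : (0:ℝ) < 1 / ((k : ℕ) : ℝ) := by positivity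
    nlinarith
  have key : ∀ m : ℕ, 1 ≤ m → ∀ r : ℝ, 1 ≤ r → r ≤ m + 1 → g r ≤ (γ m : ℝ) := by
    intro m hm r hr hrm
    have h1 : g r ≤ g (((m + 1 : ℕ) : ℝ)) := by
      apply hmono hr
      · simp only [Set.mem_Ici]; push_cast; linarith
      · push_cast; linarith
    have h2 := hcomp (m + 1) (by omega)
    simpa using h1.trans h2
  apply ciSup_le
  rintro ⟨r, hr⟩
  have hgr := hgpos r hr
  have hrpos : (0:ℝ) < r := by linarith
  by_cases hb : 0 ≤ 1 - t / g r
  · -- use floor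
    set m := ⌊r⌋₊ with hm
    have hm1 : 1 ≤ m := (Nat.one_le_floor_iff r).mpr hr
    have hmr : (m : ℝ) ≤ r := Nat.floor_le (by linarith)
    have hrm : r ≤ m + 1 := by
      have := Nat.lt_floor_add_one r; linarith
    have hγm : (0:ℝ) < (γ m : ℝ) := by exact_mod_cast hγ m
    have hgγ : g r ≤ (γ m : ℝ) := key m hm1 r hr hrm
    have ha : 1 - t / g r ≤ 1 - t / (γ m : ℝ) := by
      have : t / (γ m : ℝ) ≤ t / g r := div_le_div_of_nonneg_left ht hgr hgγ
      linarith
    have hmpos : (0:ℝ) < (m : ℝ) := by exact_mod_cast hm1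
    have hstep : (1 / r) * (1 - t / g r) ≤ (1 / (m:ℝ)) * (1 - t / (γ m : ℝ)) := by
      have h1r : 1 / r ≤ 1 / (m:ℝ) := by
        apply one_div_le_one_div_of_le hmpos hmr
      calc (1 / r) * (1 - t / g r) ≤ (1 / (m:ℝ)) * (1 - t / g r) :=
            mul_le_mul_of_nonneg_right h1r hb
        _ ≤ (1 / (m:ℝ)) * (1 - t / (γ m : ℝ)) := by
            apply mul_le_mul_of_nonneg_left ha (by positivity)
    exact hstep.trans (le_ciSup hbdd ⟨m, hm1⟩)
  · push_neg at hb
    set m := ⌈r⌉₊ with hm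
    have hm1 : 1 ≤ m := by
      rw [Nat.one_le_ceil_iff]; linarith
    have hmr : r ≤ (m : ℝ) := Nat.le_ceil r
    have hrm : r ≤ m + 1 := by linarith
    have hγm : (0:ℝ) < (γ m : ℝ) := by exact_mod_cast hγ m
    have hgγ : g r ≤ (γ m : ℝ) := key m hm1 r hr hrm
    have ha : 1 - t / g r ≤ 1 - t / (γ m : ℝ) := by
      have : t / (γ m : ℝ) ≤ t / g r := div_le_div_of_nonneg_left ht hgr hgγ
      linarith
    have hmpos : (0:ℝ) < (m : ℝ) := by exact_mod_cast hm1
    have hstep : (1 / r) * (1 - t / g r) ≤ (1 / (m:ℝ)) * (1 - t / (γ m : ℝ)) := by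
      by_cases ha2 : 0 ≤ 1 - t / (γ m : ℝ)
      · have : (1 / r) * (1 - t / g r) < 0 :=
          mul_neg_of_pos_of_neg (by positivity) hb
        have : (0:ℝ) ≤ (1 / (m:ℝ)) * (1 - t / (γ m : ℝ)) := by positivity
        linarith
      · push_neg at ha2
        have h1r : 1 / (m:ℝ) ≤ 1 / r := one_div_le_one_div_of_le hrpos hmr
        calc (1 / r) * (1 - t / g r) ≤ (1 / r) * (1 - t / (γ m : ℝ)) :=
              mul_le_mul_of_nonneg_left ha (by positivity)
          _ ≤ (1 / (m:ℝ)) * (1 - t / (γ m : ℝ)) := by nlinarith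
    exact hstep.trans (le_ciSup hbdd ⟨m, hm1⟩)
end

section
/- Let g : (0,∞) → (0,∞) be a strictly increasing differentiable function with tame superpolynomial growth (TSPG). Then for every ε ∈ (0,1) there exists R > 0 such that for every r ≥ R, (1−ε)/r ≤ sup_{s > 0} (1/s)·(1 − g(r)/g(s)) ≤ 1/r; that is, (1−ε)/g⁻¹(t) ≤ U_g(t) ≤ 1/g⁻¹(t) for all sufficiently large t in the range of g. -/
open Filter

theorem stmt18 (g g' : ℝ → ℝ) (hgpos : ∀ r : ℝ, 0 < r → 0 < g r)
    (hmono : StrictMonoOn g (Set.Ioi 0))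
    (hderiv : ∀ r : ℝ, 0 < r → HasDerivAt g (g' r) r)
    (hg'pos : ∀ r : ℝ, 0 < r → 0 < g' r)
    (htame_top : Filter.Tendsto (fun r => r * g' r / g r) Filter.atTop Filter.atTop)
    (htame_zero : ∀ lam : ℝ, 0 < lam → lam < 1 →
      Filter.Tendsto (fun r => r * g' r * g (lam * r) / (g r) ^ 2)
        Filter.atTop (nhds 0))
    (ε : ℝ) (hε0 : 0 < ε) (hε1 : ε < 1) :
    ∃ R : ℝ, 0 < R ∧ ∀ r : ℝ, R ≤ r →
      (1 - ε) / r ≤ (⨆ s : Set.Ioi (0 : ℝ), (1 / (s : ℝ)) * (1 - g r / g s)) ∧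
      (⨆ s : Set.Ioi (0 : ℝ), (1 / (s : ℝ)) * (1 - g r / g s)) ≤ 1 / r := by
  haveI : Nonempty (Set.Ioi (0:ℝ)) := ⟨⟨1, by norm_num⟩⟩
  set lam : ℝ := 1 - ε/2 with hlamdef
  have hlam0 : 0 < lam := by simp only [hlamdef]; linarith
  have hlam1 : lam < 1 := by simp only [hlamdef]; linarith
  -- g(lam r)/g r → 0
  have hratio : Tendsto (fun r => g (lam * r) / g r) atTop (nhds 0) := by
    have h1 := htame_zero lam hlam0 hlam1
    have h2 : Tendsto (fun r => (r * g' r / g r)⁻¹) atTop (nhds 0) :=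
      tendsto_inv_atTop_zero.comp htame_top
    have h3 : Tendsto (fun r => (r * g' r * g (lam*r) / (g r)^2) * (r * g' r / g r)⁻¹)
        atTop (nhds 0) := by simpa using h1.mul h2
    have heq : (fun r => (r * g' r * g (lam*r) / (g r)^2) * (r * g' r / g r)⁻¹)
        =ᶠ[atTop] fun r => g (lam * r) / g r := by
      filter_upwards [eventually_gt_atTop 0] with r hr
      have hg := hgpos r hr
      have hg' := hg'pos r hr
      field_simp
    exact h3.congr' heq
  have hev : ∀ᶠ r in atTop, g (lam * r) / g r ≤ ε/2 :=
    hratio.eventually_le_const (by linarith : (0:ℝ) < ε/2)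
  obtain ⟨R₀, hR₀⟩ := hev.exists_forall_of_atTop
  refine ⟨max 1 R₀, lt_of_lt_of_le one_pos (le_max_left _ _), fun r hr => ?_⟩
  have hr1 : (1:ℝ) ≤ r := le_trans (le_max_left _ _) hr
  have hr0 : 0 < r := lt_of_lt_of_le one_pos hr1
  have hgr := hgpos r hr0
  -- the uniform bound
  have hbdd : ∀ s : Set.Ioi (0:ℝ), (1 / (s : ℝ)) * (1 - g r / g s) ≤ 1/r := by
    rintro ⟨s, hs⟩
    simp only [Set.mem_Ioi] at hs
    have hgs := hgpos s hs
    rcases le_total s r with hsr | hrs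
    · have hgsr : g s ≤ g r := hmono.monotoneOn hs hr0 hsr
      have h1 : 1 - g r / g s ≤ 0 := by
        have : (1:ℝ) ≤ g r / g s := (one_le_div hgs).2 hgsr
        linarith
      have : (1 / s) * (1 - g r / g s) ≤ 0 :=
        mul_nonpos_of_nonneg_of_nonpos (by positivity) h1
      exact this.trans (by positivity)
    · have hgrs : g r ≤ g s := hmono.monotoneOn hr0 (hr0.trans_le hrs) hrs
      have h1 : 1 - g r / g s ≤ 1 := by
        have : 0 ≤ g r / g s := by positivity
        linarith
      have h0 : 0 ≤ 1 - g r / g s := by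
        have : g r / g s ≤ 1 := (div_le_one hgs).2 hgrs
        linarith
      calc (1 / s) * (1 - g r / g s) ≤ (1 / s) * 1 := by
            apply mul_le_mul_of_nonneg_left h1 (by positivity)
        _ = 1 / s := by ring
        _ ≤ 1 / r := by apply one_div_le_one_div_of_le hr0 hrs
  have hBdd : BddAbove (Set.range fun s : Set.Ioi (0:ℝ) => (1 / (s : ℝ)) * (1 - g r / g s)) :=
    ⟨1/r, by rintro x ⟨s, rfl⟩; exact hbdd s⟩
  constructor
  · -- lower bound via s = r / lam
    have hsel : r / lam ∈ Set.Ioi (0:ℝ) := by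
      simp only [Set.mem_Ioi]; positivity
    have hle := le_ciSup hBdd ⟨r / lam, hsel⟩
    refine le_trans ?_ hle
    have hkey : g (lam * (r / lam)) / g (r / lam) ≤ ε/2 := by
      apply hR₀
      calc R₀ ≤ max 1 R₀ := le_max_right _ _
        _ ≤ r := hr
        _ ≤ r / lam := by
            rw [le_div_iff₀ hlam0]
            nlinarith
    rw [mul_div_cancel₀ _ (ne_of_gt hlam0)] at hkey
    have hgs := hgpos (r/lam) (by positivity)
    have hq0 : 0 ≤ g r / g (r/lam) := by positivity
    have hval : (1 / (r / lam)) * (1 - g r / g (r/lam)) = (lam / r) * (1 - g r / g (r/lam)) := by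
      rw [one_div_div]
    show (1 - ε) / r ≤ (1 / (r / lam)) * (1 - g r / g (r/lam))
    rw [hval]
    have hnum : 1 - ε ≤ lam * (1 - g r / g (r/lam)) := by
      rw [hlamdef]; nlinarith [hq0, hkey]
    have hrw : lam / r * (1 - g r / g (r/lam)) = (lam * (1 - g r / g (r/lam))) / r := by ring
    rw [hrw]
    gcongr
  · exact ciSup_le hbdd
end

section
/- Let f, g : (0,∞) → (0,∞) be functions satisfying f(x)·g(1/x) = x for every x > 0. Then for every t > 0, sup_{r > 0} (1/r)·(1 − t/g(r)) = t · sup_{x > 0} ( x/t − f(x) ); that is, U_g(t) = t·L_f(1/t), where L_f is the Legendre transform of f. -/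
/-! Substituting `r = 1 / x`, the relation gives `t / g (1 / x) = t * f x / x`, so the term of the
left supremum at `r = 1 / x` is `x - t * f x = t * (x / t - f x)`; since `t ≥ 0` the factor `t`
comes out of the supremum. -/

open Set

theorem iSup_Ioi_zero_comp_one_div {α : Type*} [SupSet α] (φ : ℝ → α) :
    ⨆ x : Ioi (0 : ℝ), φ (1 / x) = ⨆ r : Ioi (0 : ℝ), φ r := by
  let inv : Ioi (0 : ℝ) → Ioi (0 : ℝ) := fun x => ⟨1 / x, mem_Ioi.mpr (one_div_pos.mpr x.2)⟩
  have hinv : Function.Involutive inv := fun x => Subtype.ext (one_div_one_div (x : ℝ))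
  exact hinv.surjective.iSup_comp fun r => φ r

theorem one_div_one_div_mul_one_sub_div {K : Type*} [Field K] {a b x t : K}
    (hx : x ≠ 0) (ht : t ≠ 0) (hab : a * b = x) :
    1 / (1 / x) * (1 - t / b) = t * (x / t - a) := by
  have hb : b ≠ 0 := right_ne_zero_of_mul (hab ▸ hx)
  rw [← hab]
  field_simp

theorem stmt19_general (f g : ℝ → ℝ)
    (hrel : ∀ x : ℝ, 0 < x → f x * g (1 / x) = x)
    (t : ℝ) (ht : 0 < t) :
    (⨆ r : Set.Ioi (0 : ℝ), (1 / (r : ℝ)) * (1 - t / g r)) =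
      t * ⨆ x : Set.Ioi (0 : ℝ), ((x : ℝ) / t - f x) := by
  rw [Real.mul_iSup_of_nonneg ht.le]
  refine (iSup_Ioi_zero_comp_one_div fun r => 1 / r * (1 - t / g r)).symm.trans
    (iSup_congr fun x => ?_)
  exact one_div_one_div_mul_one_sub_div (ne_of_gt x.2) ht.ne' (hrel x x.2)

theorem stmt19 (f g : ℝ → ℝ) (hf : ∀ x : ℝ, 0 < x → 0 < f x)
    (hg : ∀ x : ℝ, 0 < x → 0 < g x)
    (hrel : ∀ x : ℝ, 0 < x → f x * g (1 / x) = x)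
    (t : ℝ) (ht : 0 < t) :
    (⨆ r : Set.Ioi (0 : ℝ), (1 / (r : ℝ)) * (1 - t / g r)) =
      t * ⨆ x : Set.Ioi (0 : ℝ), ((x : ℝ) / t - f x) :=
  stmt19_general f g hrel t ht
end
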